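/- arXiv:2212.13749 — 2 statements merged into one kernel-verified Lean document; each statement's English description precedes it below -/
import Mathlib

section
/- Let G be a finite simple graph with edge set E and let a ∈ ℝ^E lie on no hyperplane of the matching arrangement MA(G), i.e., Σ_{j=1}^{k} (−1)^{j+1} a_{e_j} ≠ 0 for the edge sequence (e_1, …, e_k) of every simple path of G and of every simple cycle of even length of G. Then for every pair of adjacent matchings M1 ≠ M2 of G, ⟨a, χ_{M1}⟩ ≠ ⟨a, χ_{M2}⟩. -/
open scoped symmDiff
open Classical

noncomputable section

variable {V : Type*}

/-- A matching of `G`: a set of edges of `G`, no two of which share a vertex. -/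
def IsMatchingOf (G : SimpleGraph V) (M : Set (Sym2 V)) : Prop :=
  M ⊆ G.edgeSet ∧ ∀ e ∈ M, ∀ f ∈ M, e ≠ f → ∀ v : V, ¬(v ∈ e ∧ v ∈ f)

/-- The indicator vector `χ_M ∈ ℝ^E` of a set `M` of edges. -/
def chi (G : SimpleGraph V) (M : Set (Sym2 V)) : G.edgeSet → ℝ :=
  fun e => if (e : Sym2 V) ∈ M then 1 else 0

/-- The standard inner product `⟨a, x⟩ = Σ_{e ∈ E} a_e x_e` on `ℝ^E`. -/
def dot (G : SimpleGraph V) [Fintype G.edgeSet] (a x : G.edgeSet → ℝ) : ℝ :=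
  ∑ e, a e * x e

/-- `p` is a (nonempty) simple path, or a simple cycle of even length. -/
def IsSimplePathOrEvenCycle (G : SimpleGraph V) {u v : V} (p : G.Walk u v) : Prop :=
  (p.IsPath ∧ 0 < p.length) ∨ ∃ h : v = u, (p.copy rfl h).IsCycle ∧ Even p.length

/-- `A` is the edge set of a simple path, or of a simple cycle of even length, in `G`. -/
def IsPathOrEvenCycleEdgeSet (G : SimpleGraph V) (A : Set (Sym2 V)) : Prop :=
  ∃ (u v : V) (p : G.Walk u v), IsSimplePathOrEvenCycle G p ∧ A = {e | e ∈ p.edges}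

/-- Two matchings are adjacent if their symmetric difference is the edge set of a
simple path or of a simple cycle of even length. -/
def AdjacentMatchings (G : SimpleGraph V) (M1 M2 : Set (Sym2 V)) : Prop :=
  IsMatchingOf G M1 ∧ IsMatchingOf G M2 ∧ IsPathOrEvenCycleEdgeSet G (M1 ∆ M2)

/-- The alternating sum `a e₁ - a e₂ + a e₃ - ⋯` over a list. -/
def altSum {α : Type*} (a : α → ℝ) : List α → ℝ
  | [] => 0
  | e :: l => a e - altSum a l

/-- Extension by zero of a vector `ℝ^E` to all of `Sym2 V`. -/
def extendE (G : SimpleGraph V) (a : G.edgeSet → ℝ) : Sym2 V → ℝ :=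
  fun e => if h : e ∈ G.edgeSet then a ⟨e, h⟩ else 0

/-- `a` lies on no hyperplane of the matching arrangement `MA(G)`: every alternating sum
along a simple path or an even simple cycle is nonzero. -/
def OffHyperplanes (G : SimpleGraph V) (a : G.edgeSet → ℝ) : Prop :=
  ∀ ⦃u v : V⦄ (p : G.Walk u v), IsSimplePathOrEvenCycle G p →
    altSum (extendE G a) p.edges ≠ 0

/-- `a` and `b` induce the same orientation on adjacent pairs of matchings. -/
def SameOrientation (G : SimpleGraph V) [Fintype G.edgeSet] (a b : G.edgeSet → ℝ) : Prop :=
  ∀ M1 M2 : Set (Sym2 V), AdjacentMatchings G M1 M2 →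
    (dot G a (chi G M1) < dot G a (chi G M2) ↔ dot G b (chi G M1) < dot G b (chi G M2))

/-- The matching polyhedron `P(G) ⊆ ℝ^E` of Edmonds. -/
def matchingPolyhedron (G : SimpleGraph V) [Fintype V] [Fintype G.edgeSet] :
    Set (G.edgeSet → ℝ) :=
  {x | (∀ e, 0 ≤ x e) ∧
       (∀ v : V, (∑ e : G.edgeSet, if v ∈ (e : Sym2 V) then x e else 0) ≤ 1) ∧
       ∀ (S : Finset V) (k : ℕ), S.card = 2 * k + 1 →
         (∑ e : G.edgeSet, if ∀ w ∈ (e : Sym2 V), w ∈ S then x e else 0) ≤ (k : ℝ)}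

/-- The function `a` induces the relation `O` on adjacent matchings. -/
def Induces (G : SimpleGraph V) [Fintype G.edgeSet] (a : G.edgeSet → ℝ)
    (O : Set (Sym2 V) → Set (Sym2 V) → Prop) : Prop :=
  ∀ M1 M2 : Set (Sym2 V), AdjacentMatchings G M1 M2 →
    (O M1 M2 ↔ dot G a (chi G M1) < dot G a (chi G M2))

/-- `O` is an LP-orientation: a relation on pairs of adjacent matchings induced by
some `a ∈ ℝ^E` lying on no hyperplane of `MA(G)`. -/
def IsLPOrientation (G : SimpleGraph V) [Fintype G.edgeSet]
    (O : Set (Sym2 V) → Set (Sym2 V) → Prop) : Prop :=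
  (∀ M1 M2, O M1 M2 → AdjacentMatchings G M1 M2) ∧
  ∃ a : G.edgeSet → ℝ, OffHyperplanes G a ∧ Induces G a O

/-!
Write `S = M1 ∆ M2`, the edge set of a simple path or even cycle `p`, and give each edge of `S`
the sign `+1` if it lies in `M1` and `-1` if it lies in `M2`. Two consecutive edges of `p` are
distinct and share a vertex, so they cannot lie in the same matching: the signs alternate along
`p`. Hence the alternating sum of `a` along `p` is, up to a global sign, `Σ_{e ∈ S} ± a_e`,
which is exactly `⟨a, χ_{M1}⟩ - ⟨a, χ_{M2}⟩`; it is nonzero because `a` is off `MA(G)`.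
-/

section AltSum

variable {α : Type*} {g σ : α → ℝ}

theorem altSum_cons_eq_mul_sum (hσ : ∀ x, σ x * σ x = 1) :
    ∀ {e : α} {l : List α}, (e :: l).IsChain (fun x y => σ y = -σ x) →
      altSum g (e :: l) = σ e * ((e :: l).map fun x => σ x * g x).sum
  | e, [], _ => by
    simp only [altSum, List.map, List.sum_cons, List.sum_nil]
    linear_combination (-g e) * hσ e
  | e, f :: l, h => by
    rw [List.isChain_cons_cons] at h
    obtain ⟨hflip, hrest⟩ := h
    rw [altSum, altSum_cons_eq_mul_sum hσ hrest]
    simp only [List.map_cons, List.sum_cons]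
    rw [hflip]
    linear_combination (-g e) * hσ e

theorem abs_altSum_eq_abs_sum (hσ : ∀ x, σ x * σ x = 1) {l : List α}
    (h : l.IsChain (fun x y => σ y = -σ x)) :
    |altSum g l| = |(l.map fun x => σ x * g x).sum| := by
  cases l with
  | nil => rfl
  | cons e l =>
    have hσe : |σ e| = 1 := by
      rcases mul_self_eq_one_iff.mp (hσ e) with h | h <;> simp [h]
    rw [altSum_cons_eq_mul_sum hσ h, abs_mul, hσe, one_mul]

end AltSum

variable {G : SimpleGraph V}

namespace SimpleGraph.Walk

theorem IsTrail.isChain_edges {u v : V} {p : G.Walk u v} (hp : p.IsTrail) :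
    p.edges.IsChain (fun e f => e ≠ f ∧ ∃ w, w ∈ e ∧ w ∈ f) := by
  induction p with
  | nil => exact List.IsChain.nil
  | cons h q ih =>
    rw [isTrail_cons] at hp
    cases q with
    | nil => exact List.IsChain.singleton _
    | cons h' q' =>
      rw [edges_cons, edges_cons, List.isChain_cons_cons]
      refine ⟨⟨?_, _, Sym2.mem_mk_right _ _, Sym2.mem_mk_left _ _⟩, ih hp.1⟩
      intro heq
      exact hp.2 (heq ▸ List.mem_cons_self)

end SimpleGraph.Walk

theorem IsSimplePathOrEvenCycle.isTrail {u v : V} {p : G.Walk u v}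
    (hp : IsSimplePathOrEvenCycle G p) : p.IsTrail := by
  rcases hp with ⟨hpath, -⟩ | ⟨_, hcycle, -⟩
  · exact hpath.isTrail
  · exact (SimpleGraph.Walk.isTrail_copy _ _ _).mp hcycle.isTrail

theorem IsMatchingOf.mem_iff_not_mem_of_mem_symmDiff {M1 M2 : Set (Sym2 V)}
    (hM1 : IsMatchingOf G M1) (hM2 : IsMatchingOf G M2) {e f : Sym2 V}
    (he : e ∈ M1 ∆ M2) (hf : f ∈ M1 ∆ M2) (hef : e ≠ f) {w : V} (hwe : w ∈ e) (hwf : w ∈ f) :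
    f ∈ M1 ↔ e ∉ M1 := by
  rw [Set.mem_symmDiff] at he hf
  have h1 := fun he1 hf1 => hM1.2 e he1 f hf1 hef w ⟨hwe, hwf⟩
  have h2 := fun he2 hf2 => hM2.2 e he2 f hf2 hef w ⟨hwe, hwf⟩
  tauto

theorem extendE_coe (a : G.edgeSet → ℝ) (e : G.edgeSet) : extendE G a e = a e :=
  dif_pos e.2

theorem sum_edgeSet_ite_mem_eq_sum_map [Fintype G.edgeSet] {L : List (Sym2 V)} (hL : L.Nodup)
    (hLG : ∀ e ∈ L, e ∈ G.edgeSet) (w : Sym2 V → ℝ) :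
    ∑ e : G.edgeSet, (if (e : Sym2 V) ∈ L then w e else 0) = (L.map w).sum := by
  rw [← Finset.sum_subtype G.edgeFinset (fun _ => SimpleGraph.mem_edgeFinset)
      (fun e => if e ∈ L then w e else 0), ← List.sum_toFinset w hL]
  simp_rw [← List.mem_toFinset (l := L)]
  rw [Finset.sum_ite_mem, Finset.inter_eq_right.mpr]
  intro e he
  exact SimpleGraph.mem_edgeFinset.mpr (hLG e (List.mem_toFinset.mp he))

theorem dot_chi_sub_dot_chi [Fintype G.edgeSet] (a : G.edgeSet → ℝ) (M1 M2 : Set (Sym2 V)) :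
    dot G a (chi G M1) - dot G a (chi G M2) =
      ∑ e : G.edgeSet,
        if (e : Sym2 V) ∈ M1 ∆ M2 then (if (e : Sym2 V) ∈ M1 then 1 else -1) * a e else 0 := by
  rw [dot, dot, ← Finset.sum_sub_distrib]
  refine Finset.sum_congr rfl fun e _ => ?_
  by_cases h1 : (e : Sym2 V) ∈ M1 <;> by_cases h2 : (e : Sym2 V) ∈ M2 <;>
    simp [chi, Set.mem_symmDiff, h1, h2]

theorem dot_ne_of_offHyperplanes_general [Fintype V]
    (G : SimpleGraph V) [DecidableRel G.Adj] (a : G.edgeSet → ℝ)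
    (ha : OffHyperplanes G a) (M1 M2 : Set (Sym2 V))
    (hadj : AdjacentMatchings G M1 M2) :
    dot G a (chi G M1) ≠ dot G a (chi G M2) := by
  obtain ⟨hM1, hM2, u, v, p, hp, hS⟩ := hadj
  set σ : Sym2 V → ℝ := fun e => if e ∈ M1 then 1 else -1
  have hσ : ∀ e, σ e * σ e = 1 := fun e => by by_cases he : e ∈ M1 <;> simp [σ, he]
  have hflip : p.edges.IsChain (fun e f => σ f = -σ e) :=
    hp.isTrail.isChain_edges.imp_of_mem_imp fun e f he hf ⟨hef, w, hwe, hwf⟩ => by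
      have := hM1.mem_iff_not_mem_of_mem_symmDiff hM2 (hS ▸ he) (hS ▸ hf) hef hwe hwf
      by_cases he1 : e ∈ M1 <;> simp [σ, he1, this]
  have hdiff : dot G a (chi G M1) - dot G a (chi G M2) =
      (p.edges.map fun e => σ e * extendE G a e).sum := by
    rw [dot_chi_sub_dot_chi, ← sum_edgeSet_ite_mem_eq_sum_map hp.isTrail.edges_nodup
      (fun _ he => p.edges_subset_edgeSet he), hS]
    simp [extendE_coe, σ]
  intro heq
  apply ha p hp
  rw [← abs_eq_zero, abs_altSum_eq_abs_sum hσ hflip, ← hdiff, heq, sub_self, abs_zero]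

/-- If `a` lies on no hyperplane of `MA(G)`, then `⟨a, χ_{M1}⟩ ≠ ⟨a, χ_{M2}⟩`
for every pair of adjacent matchings `M1 ≠ M2`. -/
theorem dot_ne_of_offHyperplanes [Fintype V] [DecidableEq V]
    (G : SimpleGraph V) [DecidableRel G.Adj] (a : G.edgeSet → ℝ)
    (ha : OffHyperplanes G a) (M1 M2 : Set (Sym2 V))
    (hadj : AdjacentMatchings G M1 M2) (hne : M1 ≠ M2) :
    dot G a (chi G M1) ≠ dot G a (chi G M2) :=
  dot_ne_of_offHyperplanes_general G a ha M1 M2 hadj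
end
end

section
/- Let G be a finite simple graph with edge set E and let a ∈ ℝ^E lie on some hyperplane of the matching arrangement MA(G), i.e., Σ_{j=1}^{k} (−1)^{j+1} a_{e_j} = 0 for the edge sequence (e_1, …, e_k) of some simple path of G or some simple cycle of even length of G. Then there exist adjacent matchings M1 ≠ M2 of G with ⟨a, χ_{M1}⟩ = ⟨a, χ_{M2}⟩. -/
open scoped symmDiff
open Classical

noncomputable section

variable {V : Type*}

/-!
Colour the edges `e₁, e₂, …, e_k` of the path or even cycle alternately. Each colour class is
a matching: consecutive edges get different colours, and for a cycle the wrap-around pair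
`e_k, e₁` does too because `k` is even. The two classes partition the path or cycle, so they
are adjacent matchings, and the difference of their `a`-weights is the alternating sum
`a e₁ - a e₂ + ⋯`, which vanishes.
-/

section AltSplit

variable {α : Type*}

def altSplit : List α → List α × List α
  | [] => ([], [])
  | e :: l => (e :: (altSplit l).2, (altSplit l).1)

@[simp]
lemma altSplit_nil : altSplit ([] : List α) = ([], []) := rfl

@[simp]
lemma altSplit_cons (e : α) (l : List α) :
    altSplit (e :: l) = (e :: (altSplit l).2, (altSplit l).1) := rfl

lemma altSum_eq_sum_sub (f : α → ℝ) (l : List α) :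
    altSum f l = ((altSplit l).1.map f).sum - ((altSplit l).2.map f).sum := by
  induction l with
  | nil => simp [altSum]
  | cons e l ih => simp only [altSum, ih, altSplit_cons, List.map_cons, List.sum_cons]; ring

lemma altSplit_sublist (l : List α) : (altSplit l).1.Sublist l ∧ (altSplit l).2.Sublist l := by
  induction l with
  | nil => simp
  | cons e l ih => exact ⟨ih.2.cons_cons e, ih.1.cons e⟩

lemma altSplit_perm (l : List α) : List.Perm ((altSplit l).1 ++ (altSplit l).2) l := by
  induction l with
  | nil => simp
  | cons e l ih => exact (List.perm_append_comm.trans ih).cons e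

lemma mem_altSplit_iff {e : α} {l : List α} :
    e ∈ (altSplit l).1 ∨ e ∈ (altSplit l).2 ↔ e ∈ l := by
  rw [← List.mem_append]
  exact (altSplit_perm l).mem_iff

lemma symmDiff_setOf_mem_altSplit {l : List α} (hl : l.Nodup) :
    {e | e ∈ (altSplit l).1} ∆ {e | e ∈ (altSplit l).2} = {e | e ∈ l} := by
  obtain ⟨-, -, hdisj⟩ := List.nodup_append.1 ((altSplit_perm l).nodup_iff.2 hl)
  ext e
  have := mem_altSplit_iff (e := e) (l := l)
  simp only [Set.mem_symmDiff]
  grind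

lemma setOf_mem_altSplit_ne {l : List α} (hl : l.Nodup) (hne : l ≠ []) :
    {e | e ∈ (altSplit l).1} ≠ {e | e ∈ (altSplit l).2} := by
  obtain ⟨e, l, rfl⟩ := List.exists_cons_of_ne_nil hne
  intro h
  have he : e ∈ {x | x ∈ (altSplit (e :: l)).2} := h ▸ List.mem_cons_self
  exact (List.nodup_cons.1 hl).1 ((altSplit_sublist l).1.subset he)

end AltSplit

lemma dot_chi_setOf_mem (G : SimpleGraph V) [Fintype G.edgeSet] (a : G.edgeSet → ℝ)
    {L : List (Sym2 V)} (hL : L.Nodup) (hLG : ∀ e ∈ L, e ∈ G.edgeSet) :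
    dot G a (chi G {e | e ∈ L}) = (L.map (extendE G a)).sum := by
  have hL' : L.toFinset = (Finset.univ.filter fun e : G.edgeSet => (e : Sym2 V) ∈ L).map
      (Function.Embedding.subtype _) := by
    ext e
    simpa using fun he => hLG e he
  rw [dot, ← List.sum_toFinset _ hL, hL', Finset.sum_map, Finset.sum_filter]
  refine Finset.sum_congr rfl fun e _ => ?_
  simp [chi, extendE]

lemma dot_chi_altSplit_sub (G : SimpleGraph V) [Fintype G.edgeSet] (a : G.edgeSet → ℝ)
    {L : List (Sym2 V)} (hL : L.Nodup) (hLG : ∀ e ∈ L, e ∈ G.edgeSet) :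
    dot G a (chi G {e | e ∈ (altSplit L).1}) - dot G a (chi G {e | e ∈ (altSplit L).2}) =
      altSum (extendE G a) L := by
  obtain ⟨hsub₁, hsub₂⟩ := altSplit_sublist L
  rw [dot_chi_setOf_mem G a (hL.sublist hsub₁) fun e he => hLG e (hsub₁.subset he),
    dot_chi_setOf_mem G a (hL.sublist hsub₂) fun e he => hLG e (hsub₂.subset he),
    altSum_eq_sum_sub]

def NoCommonVertex (e f : Sym2 V) : Prop := ∀ x, ¬(x ∈ e ∧ x ∈ f)

instance : Std.Symm (NoCommonVertex (V := V)) := ⟨fun _ _ h x hx => h x hx.symm⟩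

lemma isMatchingOf_setOf_mem {G : SimpleGraph V} {L : List (Sym2 V)}
    (hG : ∀ e ∈ L, e ∈ G.edgeSet) (hL : L.Pairwise NoCommonVertex) :
    IsMatchingOf G {e | e ∈ L} :=
  ⟨hG, fun _ he _ hf hne => hL.forall he hf hne⟩

namespace SimpleGraph.Walk

variable {G : SimpleGraph V}

lemma IsPath.not_mem_of_mem_altSplit_snd {u v : V} {p : G.Walk u v} (hp : p.IsPath) :
    ∀ e ∈ (altSplit p.edges).2, u ∉ e := by
  cases p with
  | nil => simp
  | cons h q =>
    intro e he hu
    simp only [edges_cons, altSplit_cons] at he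
    exact (cons_isPath_iff h q).1 hp |>.2 <|
      mem_support_of_mem_edges (mem_altSplit_iff.1 (.inl he)) hu

lemma IsPath.end_not_mem_of_mem_altSplit {u v : V} {p : G.Walk u v} (hp : p.IsPath) :
    (Even p.length → ∀ e ∈ (altSplit p.edges).1, v ∉ e) ∧
      (Odd p.length → ∀ e ∈ (altSplit p.edges).2, v ∉ e) := by
  induction p with
  | nil => simp
  | cons h q ih =>
    obtain ⟨hq, hu⟩ := (cons_isPath_iff h q).1 hp
    simp only [length_cons, Nat.even_add_one, Nat.not_even_iff_odd, Nat.odd_add_one,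
      Nat.not_odd_iff_even, edges_cons, altSplit_cons, List.mem_cons, forall_eq_or_imp]
    refine ⟨fun hodd => ⟨fun hv => ?_, (ih hq).2 hodd⟩, (ih hq).1⟩
    rcases Sym2.mem_iff.1 hv with rfl | rfl
    · exact hu q.end_mem_support
    · exact hodd.pos.ne' (isPath_iff_nil.1 hq).length_eq_zero

lemma IsPath.pairwise_altSplit {u v : V} {p : G.Walk u v} (hp : p.IsPath) :
    (altSplit p.edges).1.Pairwise NoCommonVertex ∧
      (altSplit p.edges).2.Pairwise NoCommonVertex := by
  induction p with
  | nil => simp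
  | cons h q ih =>
    obtain ⟨hq, hu⟩ := (cons_isPath_iff h q).1 hp
    obtain ⟨ih₁, ih₂⟩ := ih hq
    refine ⟨List.pairwise_cons.2 ⟨fun f hf x ⟨hx, hxf⟩ => ?_, ih₂⟩, ih₁⟩
    rcases Sym2.mem_iff.1 hx with rfl | rfl
    · exact hu (mem_support_of_mem_edges (mem_altSplit_iff.1 (.inr hf)) hxf)
    · exact hq.not_mem_of_mem_altSplit_snd f hf hxf

end SimpleGraph.Walk

namespace IsSimplePathOrEvenCycle

variable {G : SimpleGraph V} {u v : V} {p : G.Walk u v}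

lemma edges_nodup (hp : IsSimplePathOrEvenCycle G p) : p.edges.Nodup := by
  rcases hp with ⟨hp, -⟩ | ⟨rfl, hc, -⟩
  · exact hp.edges_nodup
  · simpa using hc.edges_nodup

lemma edges_ne_nil (hp : IsSimplePathOrEvenCycle G p) : p.edges ≠ [] := by
  rw [← List.length_pos_iff, SimpleGraph.Walk.length_edges]
  rcases hp with ⟨-, hpos⟩ | ⟨rfl, hc, -⟩
  · exact hpos
  · simpa using hc.three_le_length.trans_lt' three_pos

lemma pairwise_altSplit (hp : IsSimplePathOrEvenCycle G p) :
    (altSplit p.edges).1.Pairwise NoCommonVertex ∧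
      (altSplit p.edges).2.Pairwise NoCommonVertex := by
  rcases hp with ⟨hp, -⟩ | ⟨rfl, hc, heven⟩
  · exact hp.pairwise_altSplit
  rw [SimpleGraph.Walk.copy_rfl_rfl] at hc
  cases p with
  | nil => exact (hc.ne_nil rfl).elim
  | cons h q =>
    have hq := ((SimpleGraph.Walk.cons_isCycle_iff q h).1 hc).1
    have hodd : Odd q.length := by simpa [Nat.even_add_one] using heven
    obtain ⟨hq₁, hq₂⟩ := hq.pairwise_altSplit
    refine ⟨List.pairwise_cons.2 ⟨fun f hf x ⟨hx, hxf⟩ => ?_, hq₂⟩, hq₁⟩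
    rcases Sym2.mem_iff.1 hx with rfl | rfl
    · exact hq.end_not_mem_of_mem_altSplit.2 hodd f hf hxf
    · exact hq.not_mem_of_mem_altSplit_snd f hf hxf

lemma isMatchingOf_altSplit (hp : IsSimplePathOrEvenCycle G p) :
    IsMatchingOf G {e | e ∈ (altSplit p.edges).1} ∧
      IsMatchingOf G {e | e ∈ (altSplit p.edges).2} :=
  ⟨isMatchingOf_setOf_mem (fun _ he => p.edges_subset_edgeSet
      ((altSplit_sublist _).1.subset he)) hp.pairwise_altSplit.1,
    isMatchingOf_setOf_mem (fun _ he => p.edges_subset_edgeSet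
      ((altSplit_sublist _).2.subset he)) hp.pairwise_altSplit.2⟩

end IsSimplePathOrEvenCycle

theorem exists_adjacent_dot_eq_of_on_hyperplane_general [Fintype V]
    (G : SimpleGraph V) [DecidableRel G.Adj] (a : G.edgeSet → ℝ)
    (ha : ∃ (u v : V) (p : G.Walk u v), IsSimplePathOrEvenCycle G p ∧
      altSum (extendE G a) p.edges = 0) :
    ∃ M1 M2 : Set (Sym2 V), AdjacentMatchings G M1 M2 ∧ M1 ≠ M2 ∧
      dot G a (chi G M1) = dot G a (chi G M2) := by
  obtain ⟨u, v, p, hp, hsum⟩ := ha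
  refine ⟨{e | e ∈ (altSplit p.edges).1}, {e | e ∈ (altSplit p.edges).2},
    ⟨hp.isMatchingOf_altSplit.1, hp.isMatchingOf_altSplit.2,
      u, v, p, hp, symmDiff_setOf_mem_altSplit hp.edges_nodup⟩,
    setOf_mem_altSplit_ne hp.edges_nodup hp.edges_ne_nil, ?_⟩
  rw [← sub_eq_zero, dot_chi_altSplit_sub G a hp.edges_nodup fun _ he => p.edges_subset_edgeSet he,
    hsum]

/-- If `a` lies on some hyperplane of `MA(G)`, then there exist adjacent
matchings `M1 ≠ M2` with `⟨a, χ_{M1}⟩ = ⟨a, χ_{M2}⟩`. -/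
theorem exists_adjacent_dot_eq_of_on_hyperplane [Fintype V] [DecidableEq V]
    (G : SimpleGraph V) [DecidableRel G.Adj] (a : G.edgeSet → ℝ)
    (ha : ∃ (u v : V) (p : G.Walk u v), IsSimplePathOrEvenCycle G p ∧
      altSum (extendE G a) p.edges = 0) :
    ∃ M1 M2 : Set (Sym2 V), AdjacentMatchings G M1 M2 ∧ M1 ≠ M2 ∧
      dot G a (chi G M1) = dot G a (chi G M2) :=
  exists_adjacent_dot_eq_of_on_hyperplane_general G a ha
end
end
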